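/- Let Λ₊ := { v ∈ ℝ^{p+q} : ⟨v,v⟩ = 0 and v^p + v^{p+1} > 0 }. For every x ∈ Λ₊, the AN-orbit of x equals Λ₊; in other words, Λ₊ is a single AN-orbit. -/

import Mathlib

open Matrix

noncomputable section

/-- 1-based standard basis vector `e i` of `ℝ^n` (zero if `i` is out of range). -/
def stdE (n i : ℕ) : Fin n → ℝ := fun j => if (j : ℕ) + 1 = i then 1 else 0

/-- `w i := e_{p-i+1} - e_{p+i}`. -/
def wVec (p q i : ℕ) : Fin (p + q) → ℝ := stdE (p + q) (p - i + 1) - stdE (p + q) (p + i)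

/-- `v i := e_{p-i+1} + e_{p+i}`. -/
def vVec (p q i : ℕ) : Fin (p + q) → ℝ := stdE (p + q) (p - i + 1) + stdE (p + q) (p + i)

/-- The scalar product of signature `(p,q)` on `ℝ^{p+q}`. -/
def ip (p q : ℕ) (x y : Fin (p + q) → ℝ) : ℝ :=
  ∑ i : Fin (p + q), (if (i : ℕ) < p then (1 : ℝ) else -1) * x i * y i

/-- The matrix `J = diag(I_p, -I_q)`. -/
def Jmat (p q : ℕ) : Matrix (Fin (p + q)) (Fin (p + q)) ℝ :=
  Matrix.diagonal (fun i => if (i : ℕ) < p then (1 : ℝ) else -1)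

/-- Entry of a square matrix, with 1-based indices (0 outside the range). -/
def ent {n : ℕ} (X : Matrix (Fin n) (Fin n) ℝ) (i j : ℕ) : ℝ :=
  if h : i - 1 < n ∧ j - 1 < n then X ⟨i - 1, h.1⟩ ⟨j - 1, h.2⟩ else 0

/-- Coordinate of a vector, with 1-based index (0 outside the range). -/
def vent {n : ℕ} (x : Fin n → ℝ) (i : ℕ) : ℝ :=
  if h : i - 1 < n then x ⟨i - 1, h⟩ else 0

lemma ent_zero {n : ℕ} (i j : ℕ) : ent (0 : Matrix (Fin n) (Fin n) ℝ) i j = 0 := by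
  unfold ent; split <;> simp

lemma ent_add {n : ℕ} (X Y : Matrix (Fin n) (Fin n) ℝ) (i j : ℕ) :
    ent (X + Y) i j = ent X i j + ent Y i j := by
  unfold ent; split <;> simp [Matrix.add_apply]

lemma ent_smul {n : ℕ} (c : ℝ) (X : Matrix (Fin n) (Fin n) ℝ) (i j : ℕ) :
    ent (c • X) i j = c * ent X i j := by
  unfold ent; split <;> simp [Matrix.smul_apply]

/-- The Lie algebra `𝔰𝔬(p,q)`, as a set of matrices. -/
def soSet (p q : ℕ) : Set (Matrix (Fin (p + q)) (Fin (p + q)) ℝ) :=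
  {X | Xᵀ * Jmat p q + Jmat p q * X = 0}

lemma soSet_zero (p q : ℕ) : (0 : Matrix (Fin (p + q)) (Fin (p + q)) ℝ) ∈ soSet p q := by
  simp [soSet]

lemma soSet_add (p q : ℕ) {X Y : Matrix (Fin (p + q)) (Fin (p + q)) ℝ}
    (hX : X ∈ soSet p q) (hY : Y ∈ soSet p q) : X + Y ∈ soSet p q := by
  simp only [soSet, Set.mem_setOf_eq] at *
  rw [Matrix.transpose_add, Matrix.add_mul, Matrix.mul_add,
    show Xᵀ * Jmat p q + Yᵀ * Jmat p q + (Jmat p q * X + Jmat p q * Y)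
      = (Xᵀ * Jmat p q + Jmat p q * X) + (Yᵀ * Jmat p q + Jmat p q * Y) by abel,
    hX, hY, add_zero]

lemma soSet_smul (p q : ℕ) (c : ℝ) {X : Matrix (Fin (p + q)) (Fin (p + q)) ℝ}
    (hX : X ∈ soSet p q) : c • X ∈ soSet p q := by
  simp only [soSet, Set.mem_setOf_eq] at *
  rw [Matrix.transpose_smul, Matrix.smul_mul, Matrix.mul_smul, ← smul_add, hX, smul_zero]

/-- The set `𝔭` of symmetric elements of `𝔰𝔬(p,q)` (Cartan decomposition). -/
def pSet (p q : ℕ) : Set (Matrix (Fin (p + q)) (Fin (p + q)) ℝ) :=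
  {X | X ∈ soSet p q ∧ Xᵀ = X}

/-- The nilpotent Iwasawa factor `𝔫`, as a set of matrices; the conditions are the
entry conditions on the blocks `A`, `B`, `D` (1-based indices; `A i j = ent X i j`,
`B i l = ent X i (p + l)`, `D i j = ent X (p + i) (p + j)`). -/
def nSet (p q : ℕ) : Set (Matrix (Fin (p + q)) (Fin (p + q)) ℝ) :=
  {X | X ∈ soSet p q ∧
    (∀ i j, 1 ≤ i → i ≤ p - q → 1 ≤ j → j ≤ p - q → ent X i j = 0) ∧
    (∀ l, 1 ≤ l → l ≤ q → ent X (p - l + 1) (p + l) = 0) ∧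
    (∀ k l, 1 ≤ k → k ≤ p - q → 1 ≤ l → l ≤ q →
      ent X k (p - l + 1) = ent X k (p + l)) ∧
    (∀ i j, 1 ≤ i → i < j → j ≤ q →
      ent X (p + 1 - j) (p + 1 - i) = ent X (p + 1 - j) (p + i)) ∧
    (∀ i j, 1 ≤ i → i < j → j ≤ q →
      ent X (p + i) (p + j) = - ent X (p + 1 - i) (p + j))}

/-- The abelian factor `𝔞`, as a set of matrices: all entries vanish except the
pairs in positions `(p-l+1, p+l)` and `(p+l, p-l+1)`, `1 ≤ l ≤ q`, which are equal. -/
def aSet (p q : ℕ) : Set (Matrix (Fin (p + q)) (Fin (p + q)) ℝ) :=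
  {X | (∀ l, 1 ≤ l → l ≤ q → ent X (p - l + 1) (p + l) = ent X (p + l) (p - l + 1)) ∧
    (∀ i j, 1 ≤ i → i ≤ p + q → 1 ≤ j → j ≤ p + q →
      (¬ ∃ l, 1 ≤ l ∧ l ≤ q ∧ ((i = p - l + 1 ∧ j = p + l) ∨ (i = p + l ∧ j = p - l + 1))) →
      ent X i j = 0)}

/-- `𝔨₀`: skew-symmetric upper-left `(p-q)×(p-q)` block, all other entries zero. -/
def kSet (p q : ℕ) : Set (Matrix (Fin (p + q)) (Fin (p + q)) ℝ) :=
  {X | (∀ i j, 1 ≤ i → i ≤ p - q → 1 ≤ j → j ≤ p - q → ent X i j = - ent X j i) ∧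
    (∀ i j, 1 ≤ i → i ≤ p + q → 1 ≤ j → j ≤ p + q →
      ¬(i ≤ p - q ∧ j ≤ p - q) → ent X i j = 0)}

/-- The nilpotent Iwasawa factor `𝔫` as an `ℝ`-subspace of `M_{p+q}(ℝ)`. -/
def nSub (p q : ℕ) : Submodule ℝ (Matrix (Fin (p + q)) (Fin (p + q)) ℝ) where
  carrier := nSet p q
  zero_mem' := by
    refine ⟨soSet_zero p q, ?_, ?_, ?_, ?_, ?_⟩ <;> intros <;> simp [ent_zero]
  add_mem' := by
    rintro X Y ⟨h0, h1, h2, h3, h4, h5⟩ ⟨g0, g1, g2, g3, g4, g5⟩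
    refine ⟨soSet_add p q h0 g0, ?_, ?_, ?_, ?_, ?_⟩
    · intro i j hi hi' hj hj'
      rw [ent_add, h1 i j hi hi' hj hj', g1 i j hi hi' hj hj', add_zero]
    · intro l hl hl'
      rw [ent_add, h2 l hl hl', g2 l hl hl', add_zero]
    · intro k l hk hk' hl hl'
      rw [ent_add, ent_add, h3 k l hk hk' hl hl', g3 k l hk hk' hl hl']
    · intro i j hi hij hj
      rw [ent_add, ent_add, h4 i j hi hij hj, g4 i j hi hij hj]
    · intro i j hi hij hj
      rw [ent_add, ent_add, h5 i j hi hij hj, g5 i j hi hij hj]; ring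
  smul_mem' := by
    rintro c X ⟨h0, h1, h2, h3, h4, h5⟩
    refine ⟨soSet_smul p q c h0, ?_, ?_, ?_, ?_, ?_⟩
    · intro i j hi hi' hj hj'
      rw [ent_smul, h1 i j hi hi' hj hj', mul_zero]
    · intro l hl hl'
      rw [ent_smul, h2 l hl hl', mul_zero]
    · intro k l hk hk' hl hl'
      rw [ent_smul, ent_smul, h3 k l hk hk' hl hl']
    · intro i j hi hij hj
      rw [ent_smul, ent_smul, h4 i j hi hij hj]
    · intro i j hi hij hj
      rw [ent_smul, ent_smul, h5 i j hi hij hj]; ring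

/-- The abelian factor `𝔞` as an `ℝ`-subspace of `M_{p+q}(ℝ)`. -/
def aSub (p q : ℕ) : Submodule ℝ (Matrix (Fin (p + q)) (Fin (p + q)) ℝ) where
  carrier := aSet p q
  zero_mem' := by
    refine ⟨?_, ?_⟩ <;> intros <;> simp [ent_zero]
  add_mem' := by
    rintro X Y ⟨h1, h2⟩ ⟨g1, g2⟩
    refine ⟨?_, ?_⟩
    · intro l hl hl'
      rw [ent_add, ent_add, h1 l hl hl', g1 l hl hl']
    · intro i j hi hi' hj hj' hne
      rw [ent_add, h2 i j hi hi' hj hj' hne, g2 i j hi hi' hj hj' hne, add_zero]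
  smul_mem' := by
    rintro c X ⟨h1, h2⟩
    refine ⟨?_, ?_⟩
    · intro l hl hl'
      rw [ent_smul, ent_smul, h1 l hl hl']
    · intro i j hi hi' hj hj' hne
      rw [ent_smul, h2 i j hi hi' hj hj' hne, mul_zero]

/-- `𝔨₀` as an `ℝ`-subspace of `M_{p+q}(ℝ)`. -/
def kSub (p q : ℕ) : Submodule ℝ (Matrix (Fin (p + q)) (Fin (p + q)) ℝ) where
  carrier := kSet p q
  zero_mem' := by
    refine ⟨?_, ?_⟩ <;> intros <;> simp [ent_zero]
  add_mem' := by
    rintro X Y ⟨h1, h2⟩ ⟨g1, g2⟩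
    refine ⟨?_, ?_⟩
    · intro i j hi hi' hj hj'
      rw [ent_add, ent_add, h1 i j hi hi' hj hj', g1 i j hi hi' hj hj']; ring
    · intro i j hi hi' hj hj' hne
      rw [ent_add, h2 i j hi hi' hj hj' hne, g2 i j hi hi' hj hj' hne, add_zero]
  smul_mem' := by
    rintro c X ⟨h1, h2⟩
    refine ⟨?_, ?_⟩
    · intro i j hi hi' hj hj'
      rw [ent_smul, ent_smul, h1 i j hi hi' hj hj']; ring
    · intro i j hi hi' hj hj' hne
      rw [ent_smul, h2 i j hi hi' hj hj' hne, mul_zero]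

/-- The subspace `{X ∈ M_n(ℝ) : X x = 0}`. -/
def kerAt {n : ℕ} (x : Fin n → ℝ) : Submodule ℝ (Matrix (Fin n) (Fin n) ℝ) where
  carrier := {X | X *ᵥ x = 0}
  zero_mem' := by simp [Matrix.zero_mulVec]
  add_mem' := by
    intro X Y hX hY
    simp only [Set.mem_setOf_eq] at *
    rw [Matrix.add_mulVec, hX, hY, add_zero]
  smul_mem' := by
    intro c X hX
    simp only [Set.mem_setOf_eq] at *
    rw [Matrix.smul_mulVec, hX, smul_zero]

/-- The exponential of a matrix, as a unit of `M_n(ℝ)`, i.e. an element of `GL(n, ℝ)`. -/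
def expUnit {n : ℕ} (X : Matrix (Fin n) (Fin n) ℝ) : (Matrix (Fin n) (Fin n) ℝ)ˣ where
  val := NormedSpace.exp X
  inv := NormedSpace.exp (-X)
  val_inv := by
    rw [← Matrix.exp_add_of_commute X (-X) (Commute.neg_right (Commute.refl X)),
      add_neg_cancel, NormedSpace.exp_zero]
  inv_val := by
    rw [← Matrix.exp_add_of_commute (-X) X (Commute.neg_left (Commute.refl X)),
      neg_add_cancel, NormedSpace.exp_zero]

/-- The subgroup `N = exp(𝔫)` of `GL(p+q, ℝ)` generated by exponentials of elements of `𝔫`. -/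
def Ngrp (p q : ℕ) : Subgroup (Matrix (Fin (p + q)) (Fin (p + q)) ℝ)ˣ :=
  Subgroup.closure {g | ∃ X ∈ nSet p q, g = expUnit X}

/-- The subgroup `AN` of `GL(p+q, ℝ)` generated by exponentials of elements of `𝔞 ∪ 𝔫`. -/
def ANgrp (p q : ℕ) : Subgroup (Matrix (Fin (p + q)) (Fin (p + q)) ℝ)ˣ :=
  Subgroup.closure {g | ∃ X ∈ aSet p q ∪ nSet p q, g = expUnit X}

/-- The subgroup `Q = K₀AN` of `GL(p+q, ℝ)` generated by exponentials of `𝔨₀ ∪ 𝔞 ∪ 𝔫`. -/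
def Qgrp (p q : ℕ) : Subgroup (Matrix (Fin (p + q)) (Fin (p + q)) ℝ)ˣ :=
  Subgroup.closure {g | ∃ X ∈ kSet p q ∪ aSet p q ∪ nSet p q, g = expUnit X}

/-- The orbit `G(x)` of a point `x ∈ ℝ^n` under a subgroup `G` of `GL(n, ℝ)`. -/
def orb {n : ℕ} (G : Subgroup (Matrix (Fin n) (Fin n) ℝ)ˣ) (x : Fin n → ℝ) :
    Set (Fin n → ℝ) :=
  {v | ∃ g ∈ G, (g : Matrix (Fin n) (Fin n) ℝ) *ᵥ x = v}

end

/-!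
Write `w = e_p - e_{p+1}` and `e = e_p + e_{p+1}`, so that `⟨v, w⟩ = v^p + v^{p+1}`. The
generators of `AN` are exponentials of elements of `𝔰𝔬(p,q)`, hence isometries, and they map `w`
to positive multiples of `w` (`𝔫` kills `w`, `𝔞` rescales it); so `AN` preserves `Λ₊`.
Conversely, given `v ∈ Λ₊`, put `s = v^p + v^{p+1} > 0` and let `c` be `-v/s` with its `p`-th
and `(p+1)`-st coordinates set to `0`. An element `exp(t S)` of `exp 𝔞` with `e^t = s/2` rescales
`e` to `(s/2) e`, and the null rotation generated by `y ↦ ⟨y, c⟩ w - ⟨y, w⟩ c ∈ 𝔫` carries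
`(s/2) e` to `v`; the isotropy of `v` is what makes the `p`-th and `(p+1)`-st coordinates come out
right. Hence `Λ₊ = AN(e)`, and `AN(x) = AN(e) = Λ₊` for every `x ∈ Λ₊`.
-/

open scoped Nat

namespace Matrix

variable {m : Type*} [Fintype m]

section Wedge

variable {R : Type*} [CommRing R] {J : Matrix m m R}

def wedge (J : Matrix m m R) (u w : m → R) : Matrix m m R :=
  vecMulVec w (J *ᵥ u) - vecMulVec u (J *ᵥ w)

theorem wedge_mulVec (u w y : m → R) :
    wedge J u w *ᵥ y = (y ⬝ᵥ (J *ᵥ u)) • w - (y ⬝ᵥ (J *ᵥ w)) • u := by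
  simp [wedge, sub_mulVec, vecMulVec_mulVec, dotProduct_comm y]

theorem wedge_transpose_mul_add_mul_wedge (hJ : Jᵀ = J) (u w : m → R) :
    (wedge J u w)ᵀ * J + J * wedge J u w = 0 := by
  simp only [wedge, transpose_sub, transpose_vecMulVec, Matrix.sub_mul, Matrix.mul_sub,
    vecMulVec_mul, mul_vecMulVec, ← mulVec_transpose, hJ]
  abel

theorem dotProduct_mulVec_comm (hJ : Jᵀ = J) (x y : m → R) :
    x ⬝ᵥ (J *ᵥ y) = y ⬝ᵥ (J *ᵥ x) := by
  rw [dotProduct_mulVec, ← mulVec_transpose, hJ, dotProduct_comm]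

end Wedge

variable [DecidableEq m]

section Exponential

attribute [local instance] Matrix.linftyOpNormedRing Matrix.linftyOpNormedAlgebra

theorem hasSum_exp_mulVec (X : Matrix m m ℝ) (y : m → ℝ) :
    HasSum (fun k => (k !⁻¹ : ℝ) • (X ^ k *ᵥ y)) (NormedSpace.exp X *ᵥ y) := by
  convert (NormedSpace.exp_series_hasSum_exp' (𝕂 := ℝ) X).map (mulVec.addMonoidHomLeft y)
    (continuous_id.matrix_mulVec continuous_const) using 1
  · exact funext fun k => (smul_mulVec _ _ _).symm
  · rfl

end Exponential

theorem exp_mulVec_of_mulVec_eq_smul {X : Matrix m m ℝ} {y : m → ℝ} {μ : ℝ}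
    (h : X *ᵥ y = μ • y) : NormedSpace.exp X *ᵥ y = Real.exp μ • y := by
  have hpow (k : ℕ) : X ^ k *ᵥ y = μ ^ k • y := by
    induction k with
    | zero => simp
    | succ k ih => rw [pow_succ', ← mulVec_mulVec, ih, mulVec_smul, h, smul_smul, pow_succ]
  refine (hasSum_exp_mulVec X y).unique ?_
  simp only [hpow, smul_smul]
  rw [Real.exp_eq_exp_ℝ]
  exact (NormedSpace.exp_series_hasSum_exp' (𝕂 := ℝ) μ).smul_const y

theorem exp_mulVec_of_pow_mulVec_eq_zero {X : Matrix m m ℝ} {y : m → ℝ} {n : ℕ}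
    (h : X ^ n *ᵥ y = 0) :
    NormedSpace.exp X *ᵥ y = ∑ k ∈ Finset.range n, (k !⁻¹ : ℝ) • (X ^ k *ᵥ y) := by
  refine (hasSum_exp_mulVec X y).unique (hasSum_sum_of_ne_finset_zero fun k hk => ?_)
  obtain ⟨j, rfl⟩ := Nat.exists_eq_add_of_le' (not_lt.mp (Finset.mem_range.not.mp hk))
  rw [pow_add, ← mulVec_mulVec, h, mulVec_zero, smul_zero]

/-- `wedge J u w` kills every vector after three steps, so its exponential series stops at the
quadratic term. -/
theorem exp_wedge_mulVec {J : Matrix m m ℝ} (hJ : Jᵀ = J) {u w : m → ℝ}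
    (hww : w ⬝ᵥ (J *ᵥ w) = 0) (huw : u ⬝ᵥ (J *ᵥ w) = 0) (y : m → ℝ) :
    NormedSpace.exp (wedge J u w) *ᵥ y = y + (y ⬝ᵥ (J *ᵥ u)) • w - (y ⬝ᵥ (J *ᵥ w)) • u
      - ((y ⬝ᵥ (J *ᵥ w)) * (u ⬝ᵥ (J *ᵥ u)) / 2) • w := by
  have hw : wedge J u w *ᵥ w = 0 := by
    simp [wedge_mulVec, hww, dotProduct_mulVec_comm hJ w u, huw]
  have hu : wedge J u w *ᵥ u = (u ⬝ᵥ (J *ᵥ u)) • w := by simp [wedge_mulVec, huw]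
  have hsq : wedge J u w ^ 2 *ᵥ y = -((y ⬝ᵥ (J *ᵥ w)) * (u ⬝ᵥ (J *ᵥ u))) • w := by
    rw [sq, ← mulVec_mulVec, wedge_mulVec u w y, mulVec_sub, mulVec_smul, mulVec_smul, hw, hu,
      smul_smul]
    simp [neg_smul]
  have hcube : wedge J u w ^ 3 *ᵥ y = 0 := by
    rw [pow_succ', ← mulVec_mulVec, hsq, mulVec_smul, hw, smul_zero]
  rw [exp_mulVec_of_pow_mulVec_eq_zero hcube, Finset.sum_range_succ, Finset.sum_range_succ,
    Finset.sum_range_one, hsq, pow_zero, pow_one, one_mulVec, wedge_mulVec u w y]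
  norm_num
  module

section Isometry

variable {R : Type*} [CommRing R] {J : Matrix m m R}

def isometryGroup (J : Matrix m m R) : Subgroup (Matrix m m R)ˣ where
  carrier := {g | (g : Matrix m m R)ᵀ * J * g = J}
  one_mem' := by simp
  mul_mem' {g h} hg hh := by
    change (↑(g * h) : Matrix m m R)ᵀ * J * (↑(g * h) : Matrix m m R) = J
    calc (↑(g * h) : Matrix m m R)ᵀ * J * (↑(g * h) : Matrix m m R)
        = (↑h)ᵀ * ((↑g)ᵀ * J * ↑g) * ↑h := by
          simp only [Units.val_mul, transpose_mul, Matrix.mul_assoc]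
      _ = J := by rw [hg, hh]
  inv_mem' {g} hg := by
    change (↑g⁻¹ : Matrix m m R)ᵀ * J * (↑g⁻¹ : Matrix m m R) = J
    calc (↑g⁻¹ : Matrix m m R)ᵀ * J * (↑g⁻¹ : Matrix m m R)
        = (↑g⁻¹)ᵀ * ((↑g)ᵀ * J * ↑g) * ↑g⁻¹ := by rw [hg]
      _ = (↑g * ↑g⁻¹ : Matrix m m R)ᵀ * J * (↑g * ↑g⁻¹) := by
          simp only [transpose_mul, Matrix.mul_assoc]
      _ = J := by simp

theorem mem_isometryGroup {g : (Matrix m m R)ˣ} :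
    g ∈ isometryGroup J ↔ (g : Matrix m m R)ᵀ * J * g = J :=
  Iff.rfl

theorem dotProduct_mulVec_mulVec_of_mem_isometryGroup {g : (Matrix m m R)ˣ}
    (hg : g ∈ isometryGroup J) (x y : m → R) :
    (g *ᵥ x) ⬝ᵥ (J *ᵥ (g *ᵥ y)) = x ⬝ᵥ (J *ᵥ y) := by
  rw [dotProduct_comm, dotProduct_mulVec, ← mulVec_transpose, mulVec_mulVec, mulVec_mulVec,
    dotProduct_comm, mem_isometryGroup.mp hg]

end Isometry

section Ray

variable {𝕜 : Type*} [Field 𝕜] [LinearOrder 𝕜] [IsStrictOrderedRing 𝕜]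

def rayStabilizer (w : m → 𝕜) : Subgroup (Matrix m m 𝕜)ˣ where
  carrier := {g | ∃ μ : 𝕜, 0 < μ ∧ (g : Matrix m m 𝕜) *ᵥ w = μ • w}
  one_mem' := ⟨1, one_pos, by simp⟩
  mul_mem' := by
    rintro g h ⟨μ, hμ, hg⟩ ⟨ν, hν, hh⟩
    exact ⟨μ * ν, mul_pos hμ hν, by
      rw [Units.val_mul, ← mulVec_mulVec, hh, mulVec_smul, hg, smul_smul, mul_comm]⟩
  inv_mem' := by
    rintro g ⟨μ, hμ, hg⟩
    refine ⟨μ⁻¹, inv_pos.mpr hμ, ?_⟩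
    rw [eq_inv_smul_iff₀ hμ.ne', ← mulVec_smul, ← hg, mulVec_mulVec, Units.inv_mul, one_mulVec]

theorem mem_rayStabilizer {w : m → 𝕜} {g : (Matrix m m 𝕜)ˣ} :
    g ∈ rayStabilizer w ↔ ∃ μ : 𝕜, 0 < μ ∧ (g : Matrix m m 𝕜) *ᵥ w = μ • w :=
  Iff.rfl

theorem mulVec_dotProduct_pos_of_mem_inf {J : Matrix m m 𝕜} {w x : m → 𝕜}
    {g : (Matrix m m 𝕜)ˣ} (hg : g ∈ isometryGroup J ⊓ rayStabilizer w)
    (hx : 0 < x ⬝ᵥ (J *ᵥ w)) : 0 < (g *ᵥ x) ⬝ᵥ (J *ᵥ w) := by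
  obtain ⟨hJ, μ, hμ, hgw⟩ := hg
  rw [← dotProduct_mulVec_mulVec_of_mem_isometryGroup hJ, hgw, mulVec_smul, dotProduct_smul,
    smul_eq_mul] at hx
  exact pos_of_mul_pos_right hx hμ.le

end Ray

end Matrix

open Matrix

@[simp]
theorem coe_expUnit {n : ℕ} (X : Matrix (Fin n) (Fin n) ℝ) :
    (expUnit X : Matrix (Fin n) (Fin n) ℝ) = NormedSpace.exp X :=
  rfl

theorem expUnit_mem_isometryGroup {n : ℕ} (U : (Matrix (Fin n) (Fin n) ℝ)ˣ)
    {X : Matrix (Fin n) (Fin n) ℝ} (hX : Xᵀ * U + U * X = 0) :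
    expUnit X ∈ isometryGroup (U : Matrix (Fin n) (Fin n) ℝ) := by
  have hXt : Xᵀ = U * (-X) * (↑U⁻¹ : Matrix (Fin n) (Fin n) ℝ) := by
    calc Xᵀ = Xᵀ * U * (↑U⁻¹ : Matrix (Fin n) (Fin n) ℝ) := by simp [Matrix.mul_assoc]
      _ = U * (-X) * (↑U⁻¹ : Matrix (Fin n) (Fin n) ℝ) := by
        rw [eq_neg_of_add_eq_zero_left hX, Matrix.mul_neg]
  rw [mem_isometryGroup]
  calc (NormedSpace.exp X)ᵀ * U * NormedSpace.exp X
      = U * (NormedSpace.exp (-X) * NormedSpace.exp X) := by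
        rw [← exp_transpose, hXt, exp_units_conj]
        simp [Matrix.mul_assoc]
    _ = U := by
        rw [show NormedSpace.exp (-X) * NormedSpace.exp X = 1 from (expUnit X).inv_val,
          Matrix.mul_one]

theorem orb_eq_of_mem {n : ℕ} {G : Subgroup (Matrix (Fin n) (Fin n) ℝ)ˣ} {x y : Fin n → ℝ}
    (h : x ∈ orb G y) : orb G x = orb G y := by
  obtain ⟨h, hh, rfl⟩ := h
  ext v
  constructor
  · rintro ⟨g, hg, rfl⟩
    exact ⟨g * h, mul_mem hg hh, by rw [Units.val_mul, mulVec_mulVec]⟩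
  · rintro ⟨g, hg, rfl⟩
    refine ⟨g * h⁻¹, mul_mem hg (inv_mem hh), ?_⟩
    rw [mulVec_mulVec, Units.val_mul, Matrix.mul_assoc, Units.inv_mul, Matrix.mul_one]

theorem ent_eq_apply {n : ℕ} (X : Matrix (Fin n) (Fin n) ℝ) {i j : ℕ} (c d : Fin n)
    (hc : (c : ℕ) + 1 = i) (hd : (d : ℕ) + 1 = j) : ent X i j = X c d := by
  subst hc hd
  simp [ent]

section Signature

variable {p q : ℕ}

theorem ip_eq_dotProduct (x y : Fin (p + q) → ℝ) : ip p q x y = x ⬝ᵥ (Jmat p q *ᵥ y) := by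
  simp only [ip, Jmat, mulVec_diagonal, dotProduct]
  exact Finset.sum_congr rfl fun i _ => by ring

theorem ip_comm (x y : Fin (p + q) → ℝ) : ip p q x y = ip p q y x := by
  simp only [ip, mul_right_comm]

theorem Jmat_transpose : (Jmat p q)ᵀ = Jmat p q := diagonal_transpose _

theorem Jmat_mul_self : Jmat p q * Jmat p q = 1 := by
  simp only [Jmat, diagonal_mul_diagonal, ← diagonal_one]
  congr 1
  funext i
  split_ifs <;> norm_num

theorem expUnit_mem_isometryGroup_of_mem_soSet {X : Matrix (Fin (p + q)) (Fin (p + q)) ℝ}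
    (hX : X ∈ soSet p q) : expUnit X ∈ isometryGroup (Jmat p q) :=
  expUnit_mem_isometryGroup ⟨Jmat p q, Jmat p q, Jmat_mul_self, Jmat_mul_self⟩ hX

theorem mem_soSet_iff {X : Matrix (Fin (p + q)) (Fin (p + q)) ℝ} :
    X ∈ soSet p q ↔ ∀ i j : Fin (p + q),
      X j i * (if (j : ℕ) < p then 1 else -1) + (if (i : ℕ) < p then 1 else -1) * X i j = 0 := by
  simp only [soSet, Set.mem_setOf_eq, ← Matrix.ext_iff, Jmat, Matrix.add_apply, mul_diagonal,
    diagonal_mul, transpose_apply, Matrix.zero_apply]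

end Signature

section SoEntries

variable {p q : ℕ} {X : Matrix (Fin (p + q)) (Fin (p + q)) ℝ} (hX : X ∈ soSet p q)
include hX

theorem apply_self_eq_zero_of_mem_soSet (i : Fin (p + q)) : X i i = 0 := by
  have h := mem_soSet_iff.mp hX i i
  split_ifs at h <;> linarith

theorem apply_comm_of_mem_soSet {i j : Fin (p + q)} (hi : (i : ℕ) < p) (hj : p ≤ (j : ℕ)) :
    X i j = X j i := by
  have h := mem_soSet_iff.mp hX i j
  rw [if_neg (not_lt.mpr hj), if_pos hi] at h
  linarith

theorem apply_eq_neg_of_mem_soSet {i j : Fin (p + q)} (hi : p ≤ (i : ℕ)) (hj : p ≤ (j : ℕ)) :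
    X i j = -X j i := by
  have h := mem_soSet_iff.mp hX i j
  rw [if_neg (not_lt.mpr hj), if_neg (not_lt.mpr hi)] at h
  linarith

end SoEntries

section ASet

variable {p q : ℕ} (hpq : q ≤ p) {X : Matrix (Fin (p + q)) (Fin (p + q)) ℝ} (hX : X ∈ aSet p q)
include hpq hX

/-- In 0-based indices, the positions `(p-l+1, p+l)` and `(p+l, p-l+1)` that `𝔞` allows are
those with `i + j + 1 = 2p`. -/
theorem apply_eq_zero_of_mem_aSet {i j : Fin (p + q)} (h : (i : ℕ) + j + 1 ≠ 2 * p) :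
    X i j = 0 := by
  rw [← ent_eq_apply X i j rfl rfl]
  exact hX.2 _ _ (by omega) (by omega) (by omega) (by omega) (by rintro ⟨l, -, -, h' | h'⟩ <;> omega)

theorem apply_comm_of_mem_aSet (i j : Fin (p + q)) : X i j = X j i := by
  by_cases h : (i : ℕ) + j + 1 = 2 * p
  · rcases lt_or_ge (i : ℕ) p with hi | hi
    · have h' := hX.1 (p - i) (by omega) (by omega)
      rwa [show p - (p - i) + 1 = i + 1 by omega, show p + (p - i) = j + 1 by omega,
        ent_eq_apply X i j rfl rfl, ent_eq_apply X j i rfl rfl] at h'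
    · have h' := hX.1 (p - j) (by omega) (by omega)
      rw [show p - (p - j) + 1 = j + 1 by omega, show p + (p - j) = i + 1 by omega,
        ent_eq_apply X i j rfl rfl, ent_eq_apply X j i rfl rfl] at h'
      exact h'.symm
  · rw [apply_eq_zero_of_mem_aSet hpq hX h, apply_eq_zero_of_mem_aSet hpq hX (by omega)]

theorem mem_soSet_of_mem_aSet : X ∈ soSet p q := by
  refine mem_soSet_iff.mpr fun i j => ?_
  rw [apply_comm_of_mem_aSet hpq hX j i]
  by_cases h : (i : ℕ) + j + 1 = 2 * p
  · split_ifs <;> first | omega | ring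
  · rw [apply_eq_zero_of_mem_aSet hpq hX h]
    ring

theorem mulVec_single_sub_single_of_mem_aSet {a b : Fin (p + q)} (ha : (a : ℕ) + 1 = p)
    (hb : (b : ℕ) = p) :
    X *ᵥ (Pi.single a 1 - Pi.single b 1) = (-X a b) • (Pi.single a 1 - Pi.single b 1) := by
  have hab : a ≠ b := Fin.ne_of_val_ne (by omega)
  funext i
  rw [mulVec_sub, mulVec_single_one, mulVec_single_one]
  simp only [Pi.sub_apply, col_apply, Pi.smul_apply, Pi.single_apply, smul_eq_mul]
  by_cases hia : i = a
  · subst hia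
    rw [apply_eq_zero_of_mem_aSet hpq hX (by omega)]
    simp [hab]
  · by_cases hib : i = b
    · subst hib
      rw [apply_eq_zero_of_mem_aSet hpq hX (i := i) (j := i) (by omega),
        apply_comm_of_mem_aSet hpq hX]
      simp [hab.symm]
    · have hia' : (i : ℕ) ≠ a := fun h => hia (Fin.ext h)
      have hib' : (i : ℕ) ≠ b := fun h => hib (Fin.ext h)
      rw [apply_eq_zero_of_mem_aSet hpq hX (by omega), apply_eq_zero_of_mem_aSet hpq hX (by omega)]
      simp [hia, hib]

end ASet

def posLightCone (p q : ℕ) : Set (Fin (p + q) → ℝ) :=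
  {v | ip p q v v = 0 ∧ 0 < vent v p + vent v (p + 1)}

section LightlikePair

variable {p q : ℕ} {a b : Fin (p + q)} (ha : (a : ℕ) + 1 = p) (hb : (b : ℕ) = p)
include ha hb

theorem Jmat_mulVec_single_sub_single :
    Jmat p q *ᵥ (Pi.single a 1 - Pi.single b 1) = Pi.single a 1 + Pi.single b 1 := by
  rw [Jmat, mulVec_sub, diagonal_mulVec_single, diagonal_mulVec_single,
    if_pos (show (a : ℕ) < p by omega), if_neg (show ¬(b : ℕ) < p by omega)]
  simp [sub_eq_add_neg, Pi.single_neg]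

theorem Jmat_mulVec_single_add_single :
    Jmat p q *ᵥ (Pi.single a 1 + Pi.single b 1) = Pi.single a 1 - Pi.single b 1 := by
  rw [Jmat, mulVec_add, diagonal_mulVec_single, diagonal_mulVec_single,
    if_pos (show (a : ℕ) < p by omega), if_neg (show ¬(b : ℕ) < p by omega)]
  simp [sub_eq_add_neg, Pi.single_neg]

theorem ip_single_sub_single (v : Fin (p + q) → ℝ) :
    ip p q v (Pi.single a 1 - Pi.single b 1) = v a + v b := by
  simp [ip_eq_dotProduct, Jmat_mulVec_single_sub_single ha hb, dotProduct_add]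

theorem ip_single_add_single (v : Fin (p + q) → ℝ) :
    ip p q v (Pi.single a 1 + Pi.single b 1) = v a - v b := by
  simp [ip_eq_dotProduct, Jmat_mulVec_single_add_single ha hb, dotProduct_sub]

theorem vent_add_vent (v : Fin (p + q) → ℝ) : vent v p + vent v (p + 1) = v a + v b := by
  rw [vent, vent, dif_pos (by omega), dif_pos (by omega)]
  congr 2 <;> ext <;> simp <;> omega

theorem ip_sub_smul_single_sub_smul_single (v : Fin (p + q) → ℝ) :
    ip p q (v - v a • Pi.single a 1 - v b • Pi.single b 1)
      (v - v a • Pi.single a 1 - v b • Pi.single b 1) = ip p q v v - v a ^ 2 + v b ^ 2 := by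
  have hab : a ≠ b := Fin.ne_of_val_ne (by omega)
  have hJa : Jmat p q *ᵥ Pi.single a 1 = Pi.single a 1 := by
    rw [Jmat, diagonal_mulVec_single, if_pos (show (a : ℕ) < p by omega), mul_one]
  have hJb : Jmat p q *ᵥ Pi.single b 1 = -Pi.single b 1 := by
    rw [Jmat, diagonal_mulVec_single, if_neg (show ¬(b : ℕ) < p by omega)]
    simp [Pi.single_neg]
  have hJva : (Jmat p q *ᵥ v) a = v a := by
    simp [Jmat, mulVec_diagonal, show (a : ℕ) < p by omega]
  have hJvb : (Jmat p q *ᵥ v) b = -v b := by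
    simp [Jmat, mulVec_diagonal, show ¬(b : ℕ) < p by omega]
  simp only [ip_eq_dotProduct, mulVec_sub, mulVec_smul, hJa, hJb, smul_neg, sub_neg_eq_add,
    dotProduct_add, dotProduct_sub, sub_dotProduct, smul_dotProduct, single_dotProduct, hJva,
    one_mul, smul_eq_mul, hJvb, mul_neg, dotProduct_smul, dotProduct_single, Pi.sub_apply,
    Pi.smul_apply, Pi.single_eq_same, mul_one, sub_self, ne_eq, hab, not_false_eq_true,
    Pi.single_eq_of_ne, mul_zero, sub_zero, hab.symm, add_zero]
  ring

theorem mulVec_single_sub_single_eq_zero_of_mem_nSet {X : Matrix (Fin (p + q)) (Fin (p + q)) ℝ}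
    (hX : X ∈ nSet p q) : X *ᵥ (Pi.single a 1 - Pi.single b 1) = 0 := by
  obtain ⟨hso, -, hpair, hrow, hmid, hlow⟩ := hX
  have ent_a {i : ℕ} (c : Fin (p + q)) (hc : (c : ℕ) + 1 = i) : ent X i p = X c a :=
    ent_eq_apply X c a hc ha
  have ent_b {i : ℕ} (c : Fin (p + q)) (hc : (c : ℕ) + 1 = i) : ent X i (p + 1) = X c b :=
    ent_eq_apply X c b hc (by omega)
  have hXab : X a b = 0 := by
    simpa only [show p - 1 + 1 = p by omega, ent_b a ha] using hpair 1 le_rfl (by omega)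
  funext i
  rw [mulVec_sub, mulVec_single_one, mulVec_single_one, Pi.sub_apply, Pi.zero_apply, sub_eq_zero]
  change X i a = X i b
  rcases lt_trichotomy ((i : ℕ) + 1) p with hi | hi | hi
  · by_cases hk : (i : ℕ) + 1 ≤ p - q
    · simpa only [show p - 1 + 1 = p by omega, ent_a i rfl, ent_b i rfl]
        using hrow _ 1 (by omega) hk le_rfl (by omega)
    · simpa only [show p + 1 - (p - i) = i + 1 by omega, show p + 1 - 1 = p by omega,
        ent_a i rfl, ent_b i rfl] using hmid 1 (p - i) le_rfl (by omega) (by omega)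
  · obtain rfl : i = a := Fin.ext (by omega)
    rw [apply_self_eq_zero_of_mem_soSet hso, hXab]
  · by_cases hib : (i : ℕ) = p
    · obtain rfl : i = b := Fin.ext (by omega)
      rw [apply_self_eq_zero_of_mem_soSet hso,
        ← apply_comm_of_mem_soSet hso (by omega) (by omega), hXab]
    · have h := hlow 1 ((i : ℕ) + 1 - p) le_rfl (by omega) (by omega)
      rw [show p + (i + 1 - p) = i + 1 by omega, show p + 1 - 1 = p by omega,
        ent_eq_apply X b i (by omega) rfl, ent_eq_apply X a i ha rfl] at h
      rw [← apply_comm_of_mem_soSet hso (i := a) (by omega) (by omega),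
        apply_eq_neg_of_mem_soSet hso (j := b) (by omega) (by omega), h, neg_neg]

theorem ANgrp_le_isometryGroup_inf_rayStabilizer (hpq : q ≤ p) :
    ANgrp p q ≤ isometryGroup (Jmat p q) ⊓ rayStabilizer (Pi.single a 1 - Pi.single b 1) := by
  refine (Subgroup.closure_le _).mpr ?_
  rintro _ ⟨X, hX | hX, rfl⟩
  · exact ⟨expUnit_mem_isometryGroup_of_mem_soSet (mem_soSet_of_mem_aSet hpq hX),
      mem_rayStabilizer.mpr ⟨_, Real.exp_pos (-X a b),
        exp_mulVec_of_mulVec_eq_smul (mulVec_single_sub_single_of_mem_aSet hpq hX ha hb)⟩⟩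
  · refine ⟨expUnit_mem_isometryGroup_of_mem_soSet hX.1, mem_rayStabilizer.mpr ⟨1, one_pos, ?_⟩⟩
    simpa using exp_mulVec_of_mulVec_eq_smul (μ := 0)
      (by rw [mulVec_single_sub_single_eq_zero_of_mem_nSet ha hb hX, zero_smul])

theorem mulVec_mem_posLightCone (hpq : q ≤ p) {g : (Matrix (Fin (p + q)) (Fin (p + q)) ℝ)ˣ}
    (hg : g ∈ ANgrp p q) {v : Fin (p + q) → ℝ} (hv : v ∈ posLightCone p q) :
    (g : Matrix (Fin (p + q)) (Fin (p + q)) ℝ) *ᵥ v ∈ posLightCone p q := by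
  have hg' := ANgrp_le_isometryGroup_inf_rayStabilizer ha hb hpq hg
  obtain ⟨hv0, hv1⟩ := hv
  rw [vent_add_vent ha hb, ← ip_single_sub_single ha hb, ip_eq_dotProduct] at hv1
  refine ⟨?_, ?_⟩
  · rw [ip_eq_dotProduct, dotProduct_mulVec_mulVec_of_mem_isometryGroup hg'.1,
      ← ip_eq_dotProduct, hv0]
  · rw [vent_add_vent ha hb, ← ip_single_sub_single ha hb, ip_eq_dotProduct]
    exact mulVec_dotProduct_pos_of_mem_inf hg' hv1

theorem single_add_single_mem_aSet :
    Matrix.single a b (1 : ℝ) + Matrix.single b a 1 ∈ aSet p q := by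
  have hq : 1 ≤ q := by have := b.isLt; omega
  constructor
  · intro l hl hlq
    rw [ent_eq_apply _ ⟨p - l, by omega⟩ ⟨p + l - 1, by omega⟩ rfl (by simp; omega),
      ent_eq_apply _ ⟨p + l - 1, by omega⟩ ⟨p - l, by omega⟩ (by simp; omega) rfl]
    simp only [Matrix.add_apply, Matrix.single_apply, Fin.ext_iff]
    split_ifs <;> norm_num <;> omega
  · intro i j hi hi' hj hj' hne
    rw [ent_eq_apply _ ⟨i - 1, by omega⟩ ⟨j - 1, by omega⟩ (by simp; omega) (by simp; omega)]
    simp only [Matrix.add_apply, Matrix.single_apply, Fin.ext_iff]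
    split_ifs <;> norm_num <;> exact hne ⟨1, le_rfl, hq, by omega⟩

theorem exp_smul_single_add_single_mulVec (t : ℝ) :
    NormedSpace.exp (t • (Matrix.single a b (1 : ℝ) + Matrix.single b a 1)) *ᵥ
        (Pi.single a 1 + Pi.single b 1) = Real.exp t • (Pi.single a 1 + Pi.single b 1) := by
  have hab : a ≠ b := Fin.ne_of_val_ne (by omega)
  refine exp_mulVec_of_mulVec_eq_smul ?_
  rw [smul_mulVec, add_mulVec, single_mulVec, single_mulVec]
  simp only [Pi.add_apply, ne_eq, hab.symm, not_false_eq_true, Pi.single_eq_of_ne,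
    Pi.single_eq_same, zero_add, mul_one, hab, add_zero, smul_add]
  rfl

theorem wedge_Jmat_single_sub_single_apply (c : Fin (p + q) → ℝ) (i j : Fin (p + q)) :
    wedge (Jmat p q) c (Pi.single a 1 - Pi.single b 1) i j =
      (Pi.single a 1 - Pi.single b 1 : Fin (p + q) → ℝ) i * ((if (j : ℕ) < p then 1 else -1) * c j)
        - c i * (Pi.single a 1 + Pi.single b 1 : Fin (p + q) → ℝ) j := by
  rw [wedge, Jmat_mulVec_single_sub_single ha hb, Matrix.sub_apply, vecMulVec_apply,
    vecMulVec_apply, Jmat, mulVec_diagonal]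

theorem wedge_mem_nSet (hpq : q ≤ p) {c : Fin (p + q) → ℝ} (hca : c a = 0) (hcb : c b = 0) :
    wedge (Jmat p q) c (Pi.single a 1 - Pi.single b 1) ∈ nSet p q := by
  have hX := wedge_Jmat_single_sub_single_apply ha hb c
  refine ⟨wedge_transpose_mul_add_mul_wedge Jmat_transpose _ _, ?_, ?_, ?_, ?_, ?_⟩
  · intro i j _ _ _ _
    rw [ent_eq_apply _ ⟨i - 1, by omega⟩ ⟨j - 1, by omega⟩ (by simp; omega) (by simp; omega), hX]
    simp (disch := omega) only [Pi.sub_apply, Pi.add_apply, Pi.single_apply, Fin.ext_iff, if_neg]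
    ring
  · intro l _ _
    rw [ent_eq_apply _ ⟨p - l, by omega⟩ ⟨p + l - 1, by omega⟩ rfl (by simp; omega), hX]
    rcases eq_or_ne l 1 with rfl | hl
    · rw [show (⟨p - 1, _⟩ : Fin (p + q)) = a from Fin.ext (by simp; omega),
        show (⟨p + 1 - 1, _⟩ : Fin (p + q)) = b from Fin.ext (by simp; omega), hca, hcb]
      ring
    · simp (disch := omega) only [Pi.sub_apply, Pi.add_apply, Pi.single_apply, Fin.ext_iff,
        if_neg]
      ring
  · intro k l _ _ _ _
    rw [ent_eq_apply _ ⟨k - 1, by omega⟩ ⟨p - l, by omega⟩ (by simp; omega) rfl,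
      ent_eq_apply _ ⟨k - 1, by omega⟩ ⟨p + l - 1, by omega⟩ (by simp; omega) (by simp; omega),
      hX, hX]
    rcases eq_or_ne l 1 with rfl | hl <;>
      simp (disch := omega) only [Pi.sub_apply, Pi.add_apply, Pi.single_apply, Fin.ext_iff,
        if_pos, if_neg] <;>
      ring
  · intro i j _ _ _
    rw [ent_eq_apply _ ⟨p - j, by omega⟩ ⟨p - i, by omega⟩ (by simp; omega) (by simp; omega),
      ent_eq_apply _ ⟨p - j, by omega⟩ ⟨p + i - 1, by omega⟩ (by simp; omega) (by simp; omega),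
      hX, hX]
    rcases eq_or_ne i 1 with rfl | hi <;>
      simp (disch := omega) only [Pi.sub_apply, Pi.add_apply, Pi.single_apply, Fin.ext_iff,
        if_pos, if_neg] <;>
      ring
  · intro i j _ _ _
    rw [ent_eq_apply _ ⟨p + i - 1, by omega⟩ ⟨p + j - 1, by omega⟩ (by simp; omega)
        (by simp; omega),
      ent_eq_apply _ ⟨p - i, by omega⟩ ⟨p + j - 1, by omega⟩ (by simp; omega) (by simp; omega),
      hX, hX]
    rcases eq_or_ne i 1 with rfl | hi <;>
      simp (disch := omega) only [Pi.sub_apply, Pi.add_apply, Pi.single_apply, Fin.ext_iff,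
        if_pos, if_neg] <;>
      ring

theorem exp_wedge_mulVec_single_add_single {c : Fin (p + q) → ℝ} (hca : c a = 0)
    (hcb : c b = 0) :
    NormedSpace.exp (wedge (Jmat p q) c (Pi.single a 1 - Pi.single b 1)) *ᵥ
        (Pi.single a 1 + Pi.single b 1)
      = Pi.single a 1 + Pi.single b 1 - (2 : ℝ) • c
        - ip p q c c • (Pi.single a 1 - Pi.single b 1) := by
  have hab : a ≠ b := Fin.ne_of_val_ne (by omega)
  rw [exp_wedge_mulVec Jmat_transpose] <;>
    simp only [← ip_eq_dotProduct, ip_comm _ c, ip_single_sub_single ha hb,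
      ip_single_add_single ha hb, hca, hcb]
  · simp only [sub_self, zero_smul, add_zero, Pi.add_apply, Pi.single_eq_same, ne_eq, hab,
      not_false_eq_true, Pi.single_eq_of_ne, hab.symm, zero_add]
    module
  · simp [hab, hab.symm]
  · simp

theorem exists_mem_ANgrp_mulVec_single_add_single (hpq : q ≤ p) {v : Fin (p + q) → ℝ}
    (hv0 : ip p q v v = 0) (hv : 0 < v a + v b) :
    ∃ g ∈ ANgrp p q,
      (g : Matrix (Fin (p + q)) (Fin (p + q)) ℝ) *ᵥ (Pi.single a 1 + Pi.single b 1) = v := by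
  have hab : a ≠ b := Fin.ne_of_val_ne (by omega)
  set s := v a + v b
  set u := v - v a • Pi.single a 1 - v b • Pi.single b 1
  set c := (-s⁻¹) • u
  have hca : c a = 0 := by simp [c, u, hab]
  have hcb : c b = 0 := by simp [c, u, hab.symm]
  have hcc : ip p q c c = -(v a - v b) / s := by
    have hcu : ip p q c c = s⁻¹ ^ 2 * ip p q u u := by
      simp only [c, ip_eq_dotProduct, mulVec_smul, dotProduct_smul, smul_dotProduct, smul_eq_mul]
      ring
    rw [hcu, ip_sub_smul_single_sub_smul_single ha hb, hv0]
    field_simp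
    ring
  refine ⟨expUnit (wedge (Jmat p q) c (Pi.single a 1 - Pi.single b 1)) *
      expUnit (Real.log (s / 2) • (Matrix.single a b 1 + Matrix.single b a 1)),
    mul_mem (Subgroup.subset_closure ⟨_, Or.inr (wedge_mem_nSet ha hb hpq hca hcb), rfl⟩)
      (Subgroup.subset_closure ⟨_, Or.inl ((aSub p q).smul_mem _
        (single_add_single_mem_aSet ha hb)), rfl⟩), ?_⟩
  rw [Units.val_mul, ← mulVec_mulVec, coe_expUnit, coe_expUnit,
    exp_smul_single_add_single_mulVec ha hb, Real.exp_log (by positivity), mulVec_smul,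
    exp_wedge_mulVec_single_add_single ha hb hca hcb, hcc]
  ext i
  simp only [neg_smul, smul_neg, sub_neg_eq_add, neg_sub, Pi.smul_apply, Pi.sub_apply, Pi.add_apply,
    Pi.single_apply, smul_eq_mul, mul_ite, mul_one, mul_zero, c, u]
  split_ifs with hia hib <;> subst_vars <;> field_simp <;> ring

theorem orb_single_add_single_eq_posLightCone (hpq : q ≤ p) :
    orb (ANgrp p q) (Pi.single a 1 + Pi.single b 1) = posLightCone p q := by
  have hab : a ≠ b := Fin.ne_of_val_ne (by omega)
  refine Set.Subset.antisymm ?_ fun v ⟨hv0, hv1⟩ => ?_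
  · rintro _ ⟨g, hg, rfl⟩
    refine mulVec_mem_posLightCone ha hb hpq hg ⟨?_, ?_⟩
    · rw [ip_single_add_single ha hb]
      simp [hab, hab.symm]
    · rw [vent_add_vent ha hb]
      simp [hab, hab.symm]
  · rw [vent_add_vent ha hb] at hv1
    exact exists_mem_ANgrp_mulVec_single_add_single ha hb hpq hv0 hv1

end LightlikePair

/-- `Λ₊ := {v : ⟨v,v⟩ = 0, v^p + v^{p+1} > 0}` is a single `AN`-orbit:
for every `x ∈ Λ₊`, `AN(x) = Λ₊`. -/
theorem ANgrp_orbit_lightcone (p q : ℕ) (hq : 1 ≤ q) (hpq : q ≤ p)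
    (x : Fin (p + q) → ℝ)
    (hx0 : ip p q x x = 0) (hx1 : 0 < vent x p + vent x (p + 1)) :
    orb (ANgrp p q) x = {v | ip p q v v = 0 ∧ 0 < vent v p + vent v (p + 1)} := by
  obtain ⟨a, ha⟩ : ∃ a : Fin (p + q), (a : ℕ) + 1 = p := ⟨⟨p - 1, by omega⟩, by simp; omega⟩
  obtain ⟨b, hb⟩ : ∃ b : Fin (p + q), (b : ℕ) = p := ⟨⟨p, by omega⟩, rfl⟩
  have hΛ := orb_single_add_single_eq_posLightCone ha hb hpq
  have hx : x ∈ orb (ANgrp p q) (Pi.single a 1 + Pi.single b 1) := hΛ ▸ ⟨hx0, hx1⟩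
  rw [orb_eq_of_mem hx, hΛ, posLightCone]
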